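/- arXiv:1005.5419 — 4 statements merged into one kernel-verified Lean document; each statement's English description precedes it below -/
import Mathlib

section
/- A permutation π of {1,...,n} avoids both patterns 231 and 213 if and only if every permutation Knuth-equivalent to π avoids 231. Consequently, the number of permutations π such that π and all Knuth-equivalent permutations avoid 231 is 2^{n−1}. -/
/-- An elementary Knuth transformation on words over ℕ. -/
inductive KnuthStep : List ℕ → List ℕ → Prop
  | k1 (a b : List ℕ) (x y z : ℕ) (h1 : x < y) (h2 : y ≤ z) :
      KnuthStep (a ++ [y, z, x] ++ b) (a ++ [y, x, z] ++ b)
  | k2 (a b : List ℕ) (x y z : ℕ) (h1 : x ≤ y) (h2 : y < z) :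
      KnuthStep (a ++ [x, z, y] ++ b) (a ++ [z, x, y] ++ b)

/-- Knuth equivalence. -/
def KnuthEquiv : List ℕ → List ℕ → Prop := Relation.EqvGen KnuthStep

/-- The one-line word of a permutation of `Fin n`. -/
def wordOf {n : ℕ} (π : Equiv.Perm (Fin n)) : List ℕ :=
  List.ofFn fun i => (π i : ℕ)

/-- `π` contains the pattern 231. -/
def Contains231 {n : ℕ} (π : Equiv.Perm (Fin n)) : Prop :=
  ∃ i j k : Fin n, i < j ∧ j < k ∧ π k < π i ∧ π i < π j

/-- `π` contains the pattern 213. -/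
def Contains213 {n : ℕ} (π : Equiv.Perm (Fin n)) : Prop :=
  ∃ i j k : Fin n, i < j ∧ j < k ∧ π j < π i ∧ π i < π k

/-!
A word avoids both 231 and 213 exactly when each of its letters is the least or the greatest of
the letters from it onwards. On words without repeated letters this property is invariant under
Knuth moves: `y z x ↔ y x z` (with `x < y < z`) breaks it on both sides, and `x z y ↔ z x y`
preserves it. So if `π` avoids 231 and 213, so does its whole Knuth class. Conversely, an
occurrence `b … a … c` of 213 can be turned by Knuth moves into an occurrence of 231, by shrinking
the gap between `b` and `c`. Such a permutation is determined by recording, for each letter but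
the last, whether it is the least or the greatest of the letters that remain, so there are
`2^(n-1)` of them.
-/

open List

namespace List

variable {α : Type*}

theorem sublist_finRange_iff {n : ℕ} {l : List (Fin n)} :
    l <+ finRange n ↔ l.Pairwise (· < ·) :=
  ⟨fun h => (pairwise_lt_finRange n).sublist h, fun h =>
    sublist_of_subperm_of_pairwise (h.nodup.subperm fun x _ => mem_finRange x) h
      (pairwise_lt_finRange n)⟩

theorem triple_sublist_ofFn_iff {n : ℕ} (f : Fin n → α) {x y z : α} :
    [x, y, z] <+ ofFn f ↔ ∃ i j k, i < j ∧ j < k ∧ f i = x ∧ f j = y ∧ f k = z := by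
  simp only [ofFn_eq_map, sublist_map_iff, sublist_finRange_iff]
  constructor
  · rintro ⟨l, hl, hxyz⟩
    obtain ⟨i, j, k, rfl⟩ : ∃ i j k, l = [i, j, k] := by
      match l, hxyz with
      | [i, j, k], _ => exact ⟨i, j, k, rfl⟩
    simp only [map_cons, map_nil, cons.injEq, and_true] at hxyz
    simp only [pairwise_cons, mem_cons, not_mem_nil, or_false, forall_eq_or_imp, forall_eq,
      IsEmpty.forall_iff, implies_true, Pairwise.nil, and_self, and_true] at hl
    exact ⟨i, j, k, hl.1.1, hl.2, hxyz.1.symm, hxyz.2.1.symm, hxyz.2.2.symm⟩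
  · rintro ⟨i, j, k, hij, hjk, rfl, rfl, rfl⟩
    exact ⟨[i, j, k], by simp [hij, hjk, hij.trans hjk], rfl⟩

theorem pair_sublist_or_pair_sublist {a c : α} {t : List α} (ha : a ∈ t) (hc : c ∈ t)
    (hac : a ≠ c) : [a, c] <+ t ∨ [c, a] <+ t := by
  induction t with
  | nil => simp at ha
  | cons h t ih =>
    rcases mem_cons.1 ha with rfl | ha' <;> rcases mem_cons.1 hc with rfl | hc'
    · exact absurd rfl hac
    · exact .inl ((singleton_sublist.2 hc').cons_cons a)
    · exact .inr ((singleton_sublist.2 ha').cons_cons c)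
    · exact (ih ha' hc').imp (·.cons h) (·.cons h)

end List

section Patterns

variable {α : Type*} [LinearOrder α]

def Has231 (w : List α) : Prop := ∃ a b c, a < b ∧ b < c ∧ [b, c, a] <+ w

def Has213 (w : List α) : Prop := ∃ a b c, a < b ∧ b < c ∧ [b, a, c] <+ w

def SuffixExtremal : List α → Prop
  | [] => True
  | h :: t => ((∀ x ∈ t, h ≤ x) ∨ (∀ x ∈ t, x ≤ h)) ∧ SuffixExtremal t

theorem has231_cons {h : α} {t : List α} :
    Has231 (h :: t) ↔ Has231 t ∨ ∃ a c, a < h ∧ h < c ∧ [c, a] <+ t := by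
  simp only [Has231, sublist_cons_iff]
  grind

theorem has213_cons {h : α} {t : List α} :
    Has213 (h :: t) ↔ Has213 t ∨ ∃ a c, a < h ∧ h < c ∧ [a, c] <+ t := by
  simp only [Has213, sublist_cons_iff]
  grind

theorem suffixExtremal_iff {w : List α} : SuffixExtremal w ↔ ¬ Has231 w ∧ ¬ Has213 w := by
  induction w with
  | nil => simp [SuffixExtremal, Has231, Has213]
  | cons h t ih =>
    have head : ((∀ x ∈ t, h ≤ x) ∨ (∀ x ∈ t, x ≤ h)) ↔
        ¬ ∃ a c, a < h ∧ h < c ∧ ([c, a] <+ t ∨ [a, c] <+ t) := by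
      constructor
      · rintro hext ⟨a, c, hah, hhc, hs⟩
        have hac : a ∈ t ∧ c ∈ t := by
          rcases hs with hs | hs <;> exact ⟨hs.subset (by simp), hs.subset (by simp)⟩
        rcases hext with hmin | hmax
        · exact (hmin a hac.1).not_gt hah
        · exact (hmax c hac.2).not_gt hhc
      · contrapose!
        rintro ⟨⟨a, ha, hah⟩, c, hc, hhc⟩
        exact ⟨a, c, hah, hhc, (pair_sublist_or_pair_sublist ha hc (hah.trans hhc).ne).symm⟩
    rw [SuffixExtremal, ih, has231_cons, has213_cons, head]
    grind

theorem SuffixExtremal.of_append : ∀ {a t : List α}, SuffixExtremal (a ++ t) → SuffixExtremal t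
  | [], _, h => h
  | _ :: _, _, h => SuffixExtremal.of_append h.2

theorem suffixExtremal_append_congr {l l' : List α} (hp : l ~ l')
    (h : SuffixExtremal l ↔ SuffixExtremal l') (a : List α) :
    SuffixExtremal (a ++ l) ↔ SuffixExtremal (a ++ l') := by
  induction a with
  | nil => exact h
  | cons x a ih => simp only [cons_append, SuffixExtremal, (hp.append_left a).mem_iff, ih]

theorem not_suffixExtremal_cons {x y z : α} {t : List α} (hx : x ∈ t) (hz : z ∈ t)
    (hxy : x < y) (hyz : y < z) : ¬ SuffixExtremal (y :: t) := by
  rintro ⟨hmin | hmax, -⟩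
  · exact (hmin x hx).not_gt hxy
  · exact (hmax z hz).not_gt hyz

theorem suffixExtremal_swap_of_lt {x y z : α} (hxy : x < y) (hyz : y < z) (t : List α) :
    SuffixExtremal (x :: z :: y :: t) ↔ SuffixExtremal (z :: x :: y :: t) := by
  simp only [SuffixExtremal, mem_cons, forall_eq_or_imp]
  grind

end Patterns

theorem KnuthStep.perm {w w' : List ℕ} (h : KnuthStep w w') : w ~ w' := by
  cases h with
  | k1 a b x y z => exact (((Perm.swap x z []).cons y).append_left a).append_right b
  | k2 a b x y z => exact ((Perm.swap z x [y]).append_left a).append_right b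

namespace KnuthEquiv

theorem iff_of_knuthStep {P : List ℕ → Prop} (hP : ∀ w w', KnuthStep w w' → (P w ↔ P w'))
    {w w' : List ℕ} (h : KnuthEquiv w w') : P w ↔ P w' :=
  have hequiv : Equivalence fun u v : List ℕ => P u ↔ P v := ⟨fun _ => .rfl, .symm, .trans⟩
  hequiv.eqvGen_iff.1 (h.mono hP)

theorem perm {w w' : List ℕ} (h : KnuthEquiv w w') : w ~ w' :=
  (Perm.eqv ℕ).eqvGen_iff.1 (h.mono fun _ _ => KnuthStep.perm)

end KnuthEquiv

theorem KnuthStep.suffixExtremal_iff {w w' : List ℕ} (h : KnuthStep w w') (hw : w.Nodup) :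
    SuffixExtremal w ↔ SuffixExtremal w' := by
  cases h with
  | k1 a b x y z hxy hyz =>
    have hyz : y < z := hyz.lt_of_ne (by rintro rfl; simp [nodup_append] at hw)
    simp only [append_assoc, cons_append, nil_append]
    exact iff_of_false
      (fun h => not_suffixExtremal_cons (t := z :: x :: b) (by simp) (by simp) hxy hyz h.of_append)
      (fun h => not_suffixExtremal_cons (t := x :: z :: b) (by simp) (by simp) hxy hyz h.of_append)
  | k2 a b x y z hxy hyz =>
    have hxy : x < y := hxy.lt_of_ne (by rintro rfl; simp [nodup_append] at hw)
    simp only [append_assoc]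
    exact suffixExtremal_append_congr ((Perm.swap z x [y]).append_right b)
      (suffixExtremal_swap_of_lt hxy hyz b) a

theorem KnuthEquiv.suffixExtremal_iff {w w' : List ℕ} (h : KnuthEquiv w w') (hw : w.Nodup) :
    SuffixExtremal w ↔ SuffixExtremal w' := by
  have key := h.iff_of_knuthStep (P := fun u => u.Nodup ∧ SuffixExtremal u) fun u v huv =>
    (and_congr_right huv.suffixExtremal_iff).trans (and_congr_left' huv.perm.nodup_iff)
  exact ⟨fun hs => (key.1 ⟨hw, hs⟩).2, fun hs' => (key.2 ⟨h.perm.nodup_iff.1 hw, hs'⟩).2⟩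

/-- If some `x > b` lies between `b` and `c`, then either `b x a` is a 231 or `b … x` is a 213 with
a shorter gap. Otherwise every letter in the gap is below `b`, and one Knuth move either turns
`b a c` into `b c a` or shortens the gap. -/
theorem exists_knuthEquiv_has231_of_mem_middle {p m q : List ℕ} {b c : ℕ}
    (hw : (p ++ b :: m ++ c :: q).Nodup) (ha : ∃ a ∈ m, a < b) (hbc : b < c) :
    ∃ w, KnuthEquiv (p ++ b :: m ++ c :: q) w ∧ Has231 w := by
  obtain ⟨a, ham, hab⟩ := ha
  by_cases hbig : ∃ x ∈ m, b < x
  · obtain ⟨x, hxm, hbx⟩ := hbig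
    obtain ⟨m₁, m₂, rfl⟩ := append_of_mem hxm
    by_cases ha₁ : a ∈ m₁
    · simpa using exists_knuthEquiv_has231_of_mem_middle (p := p) (m := m₁) (q := m₂ ++ c :: q)
        (by simpa using hw) ⟨a, ha₁, hab⟩ hbx
    · have ha₂ : a ∈ m₂ := by
        simp only [mem_append, mem_cons] at ham
        grind
      refine ⟨_, .refl _, a, b, x, hab, hbx, ?_⟩
      have : [b, x, a] <+ b :: (m₁ ++ x :: m₂) :=
        (((singleton_sublist.2 ha₂).cons_cons x).trans (sublist_append_right m₁ _)).cons_cons b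
      exact this.trans (infix_append _ _ _).sublist
  · simp only [not_exists, not_and, not_lt] at hbig
    have hlt : ∀ x ∈ m, x < b := fun x hx =>
      (hbig x hx).lt_of_ne (by rintro rfl; simp [nodup_append] at hw; grind)
    match hm : m with
    | [] => simp at ham
    | [s] =>
      obtain rfl : a = s := mem_singleton.1 ham
      have hstep : KnuthStep (p ++ [b, c, a] ++ q) (p ++ b :: [a] ++ c :: q) := by
        simpa using KnuthStep.k1 p q a b c hab hbc.le
      exact ⟨_, .symm _ _ (.rel _ _ hstep), a, b, c, hab, hbc, (infix_append _ _ _).sublist⟩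
    | s :: t :: m' =>
      by_cases hts : t < s
      · simpa using exists_knuthEquiv_has231_of_mem_middle (p := p ++ [b]) (m := t :: m') (q := q)
          (by simpa using hw) ⟨t, mem_cons_self, hts⟩ ((hlt s (by simp)).trans hbc)
      · have hstep : KnuthStep (p ++ [s] ++ b :: (t :: m') ++ c :: q)
            (p ++ b :: (s :: t :: m') ++ c :: q) := by
          simpa using KnuthStep.k2 p (m' ++ c :: q) s t b (not_lt.1 hts) (hlt t (by simp))
        obtain ⟨w, hke, h231⟩ := exists_knuthEquiv_has231_of_mem_middle (hstep.perm.nodup_iff.2 hw)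
          ⟨t, mem_cons_self, hlt t (by simp)⟩ hbc
        exact ⟨w, .trans _ _ _ (.symm _ _ (.rel _ _ hstep)) hke, h231⟩
termination_by m.length
decreasing_by all_goals subst_vars; simp

theorem Has213.exists_knuthEquiv_has231 {w : List ℕ} (h : Has213 w) (hw : w.Nodup) :
    ∃ w', KnuthEquiv w w' ∧ Has231 w' := by
  obtain ⟨a, b, c, hab, hbc, hsub⟩ := h
  obtain ⟨r₁, r₂, rfl, hb, hac⟩ := cons_sublist_iff.1 hsub
  obtain ⟨s₁, s₂, rfl, ha, hc⟩ := cons_sublist_iff.1 hac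
  obtain ⟨p, u, rfl⟩ := append_of_mem hb
  obtain ⟨v, q, rfl⟩ := append_of_mem (singleton_sublist.1 hc)
  simpa using exists_knuthEquiv_has231_of_mem_middle (p := p) (m := u ++ s₁ ++ v) (q := q)
    (by simpa using hw) ⟨a, by simp [ha], hab⟩ hbc

section wordOf

variable {n : ℕ}

theorem nodup_wordOf (π : Equiv.Perm (Fin n)) : (wordOf π).Nodup :=
  nodup_ofFn.2 (Fin.val_injective.comp π.injective)

theorem wordOf_injective : Function.Injective (wordOf (n := n)) := fun _ _ h =>
  Equiv.ext fun i => Fin.val_injective (congrFun (ofFn_inj.1 h) i)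

theorem wordOf_perm_range (π : Equiv.Perm (Fin n)) : wordOf π ~ range n := by
  refine (π.ofFn_comp_perm Fin.val).trans ?_
  exact .of_eq (ext_getElem (by simp) (by simp))

theorem exists_wordOf_eq {w : List ℕ} (h : w ~ range n) :
    ∃ σ : Equiv.Perm (Fin n), wordOf σ = w := by
  have hlen : w.length = n := by simpa using h.length_eq
  have hlt : ∀ x ∈ w, x < n := fun x hx => mem_range.1 (h.subset hx)
  have hinj : Function.Injective fun i : Fin n => (⟨w[i.1], hlt _ (getElem_mem _)⟩ : Fin n) :=
    fun i j hij => Fin.ext ((h.nodup_iff.2 nodup_range).getElem_inj_iff.1 (Fin.val_eq_of_eq hij))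
  exact ⟨Equiv.ofBijective _ (Finite.injective_iff_bijective.1 hinj),
    ext_getElem (by simp [wordOf, hlen]) fun i _ _ => by simp [wordOf]⟩

theorem contains231_iff_has231 (π : Equiv.Perm (Fin n)) : Contains231 π ↔ Has231 (wordOf π) := by
  simp only [Contains231, Has231, wordOf, triple_sublist_ofFn_iff]
  constructor
  · rintro ⟨i, j, k, hij, hjk, h₁, h₂⟩
    exact ⟨_, _, _, h₁, h₂, i, j, k, hij, hjk, rfl, rfl, rfl⟩
  · rintro ⟨_, _, _, h₁, h₂, i, j, k, hij, hjk, rfl, rfl, rfl⟩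
    exact ⟨i, j, k, hij, hjk, h₁, h₂⟩

theorem contains213_iff_has213 (π : Equiv.Perm (Fin n)) : Contains213 π ↔ Has213 (wordOf π) := by
  simp only [Contains213, Has213, wordOf, triple_sublist_ofFn_iff]
  constructor
  · rintro ⟨i, j, k, hij, hjk, h₁, h₂⟩
    exact ⟨_, _, _, h₁, h₂, i, j, k, hij, hjk, rfl, rfl, rfl⟩
  · rintro ⟨_, _, _, h₁, h₂, i, j, k, hij, hjk, rfl, rfl, rfl⟩
    exact ⟨i, j, k, hij, hjk, h₁, h₂⟩

end wordOf

theorem forall_knuthEquiv_not_contains231_iff {n : ℕ} (π : Equiv.Perm (Fin n)) :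
    (∀ σ : Equiv.Perm (Fin n), KnuthEquiv (wordOf π) (wordOf σ) → ¬ Contains231 σ) ↔
      SuffixExtremal (wordOf π) := by
  simp only [contains231_iff_has231]
  constructor
  · refine fun h => suffixExtremal_iff.2 ⟨h π (.refl _), fun h213 => ?_⟩
    obtain ⟨w, hke, h231⟩ := h213.exists_knuthEquiv_has231 (nodup_wordOf π)
    obtain ⟨σ, rfl⟩ := exists_wordOf_eq (hke.perm.symm.trans (wordOf_perm_range π))
    exact h σ hke h231
  · exact fun hπ σ hke => (suffixExtremal_iff.1 ((hke.suffixExtremal_iff (nodup_wordOf π)).1 hπ)).1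

/-- The arrangement of `lo, …, lo + bs.length` whose letters, but the last, are in turn the least
(`true`) or the greatest (`false`) of the letters not yet used. -/
def minMaxWord : List Bool → ℕ → List ℕ
  | [], lo => [lo]
  | true :: bs, lo => lo :: minMaxWord bs (lo + 1)
  | false :: bs, lo => (lo + bs.length + 1) :: minMaxWord bs lo

theorem minMaxWord_perm : ∀ (bs : List Bool) (lo : ℕ), minMaxWord bs lo ~ range' lo (bs.length + 1)
  | [], lo => by simp [minMaxWord]
  | true :: bs, lo => by
    simpa [minMaxWord, range'_succ] using (minMaxWord_perm bs (lo + 1)).cons lo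
  | false :: bs, lo => by
    rw [minMaxWord, length_cons, range'_concat, Nat.one_mul, ← Nat.add_assoc]
    exact ((minMaxWord_perm bs lo).cons _).trans (perm_append_singleton _ _).symm

@[simp]
theorem length_minMaxWord (bs : List Bool) (lo : ℕ) :
    (minMaxWord bs lo).length = bs.length + 1 := by
  simpa using (minMaxWord_perm bs lo).length_eq

theorem suffixExtremal_minMaxWord : ∀ (bs : List Bool) (lo : ℕ), SuffixExtremal (minMaxWord bs lo)
  | [], lo => by simp [minMaxWord, SuffixExtremal]
  | true :: bs, lo => ⟨.inl fun x hx => by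
      have := mem_range'_1.1 ((minMaxWord_perm bs (lo + 1)).subset hx); omega,
    suffixExtremal_minMaxWord bs (lo + 1)⟩
  | false :: bs, lo => ⟨.inr fun x hx => by
      have := mem_range'_1.1 ((minMaxWord_perm bs lo).subset hx); omega,
    suffixExtremal_minMaxWord bs lo⟩

theorem minMaxWord_injective : ∀ lo : ℕ, Function.Injective (minMaxWord · lo)
  | _, [], [], _ => rfl
  | _, [], _ :: _, h | _, _ :: _, [], h => by simpa using congrArg length h
  | _, true :: _, true :: _, h => congrArg _ (minMaxWord_injective _ (cons.inj h).2)
  | _, false :: _, false :: _, h => congrArg _ (minMaxWord_injective _ (cons.inj h).2)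
  | _, true :: _, false :: _, h | _, false :: _, true :: _, h => by
    have := (cons.inj h).1
    omega

theorem exists_minMaxWord_eq {k lo : ℕ} {w : List ℕ} (hw : w ~ range' lo (k + 1))
    (hse : SuffixExtremal w) : ∃ bs : List Bool, bs.length = k ∧ minMaxWord bs lo = w := by
  induction k generalizing lo w with
  | zero => exact ⟨[], rfl, (perm_singleton.1 hw).symm⟩
  | succ k ih =>
    obtain ⟨h, t, rfl⟩ := exists_cons_of_length_eq_add_one (by simpa using hw.length_eq)
    have hmem : ∀ x, x ∈ h :: t ↔ lo ≤ x ∧ x < lo + (k + 2) := fun _ =>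
      hw.mem_iff.trans mem_range'_1
    rcases hse with ⟨hmin | hmax, hse⟩
    · obtain rfl : h = lo := by
        rcases mem_cons.1 ((hmem lo).2 (by omega)) with hlo | hlo
        · exact hlo.symm
        · exact le_antisymm (hmin lo hlo) ((hmem h).1 mem_cons_self).1
      obtain ⟨bs, rfl, hbs⟩ := ih (perm_cons h |>.1 hw) hse
      exact ⟨true :: bs, rfl, by rw [minMaxWord, hbs]⟩
    · obtain rfl : h = lo + (k + 1) := by
        rcases mem_cons.1 ((hmem (lo + (k + 1))).2 (by omega)) with hhi | hhi
        · exact hhi.symm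
        · exact le_antisymm (by have := ((hmem h).1 mem_cons_self).2; omega) (hmax _ hhi)
      have hconcat : range' lo (k + 2) ~ (lo + (k + 1)) :: range' lo (k + 1) := by
        rw [range'_concat, Nat.one_mul]
        exact perm_append_singleton _ _
      obtain ⟨bs, rfl, hbs⟩ := ih (perm_cons _ |>.1 (hw.trans hconcat)) hse
      exact ⟨false :: bs, rfl, by rw [minMaxWord, hbs, Nat.add_assoc]⟩

theorem ncard_suffixExtremal (n : ℕ) :
    {π : Equiv.Perm (Fin n) | SuffixExtremal (wordOf π)}.ncard = 2 ^ (n - 1) := by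
  rcases n with _ | k
  · simp [wordOf, SuffixExtremal] -- `2 ^ (0 - 1) = 1` counts the empty permutation
  have himage : wordOf '' {π : Equiv.Perm (Fin (k + 1)) | SuffixExtremal (wordOf π)} =
      (minMaxWord · 0) '' {bs | bs.length = k} := by
    ext w
    constructor
    · rintro ⟨π, hπ, rfl⟩
      exact exists_minMaxWord_eq (by simpa [range_eq_range'] using wordOf_perm_range π) hπ
    · rintro ⟨bs, rfl, rfl⟩
      obtain ⟨σ, hσ⟩ := exists_wordOf_eq (n := bs.length + 1)
        (by simpa [range_eq_range'] using minMaxWord_perm bs 0)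
      exact ⟨σ, show SuffixExtremal (wordOf σ) from hσ ▸ suffixExtremal_minMaxWord bs 0, hσ⟩
  rw [← Set.ncard_image_of_injective _ wordOf_injective, himage,
    Set.ncard_image_of_injective _ (minMaxWord_injective 0)]
  show Nat.card (List.Vector Bool k) = _
  simp [Nat.card_eq_fintype_card, card_vector]

theorem stmt_9_general (n : ℕ) :
    (∀ π : Equiv.Perm (Fin n),
      (¬ Contains231 π ∧ ¬ Contains213 π) ↔
        ∀ σ : Equiv.Perm (Fin n), KnuthEquiv (wordOf π) (wordOf σ) → ¬ Contains231 σ) ∧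
    {π : Equiv.Perm (Fin n) |
        ∀ σ : Equiv.Perm (Fin n), KnuthEquiv (wordOf π) (wordOf σ) → ¬ Contains231 σ}.ncard =
      2 ^ (n - 1) := by
  simp only [forall_knuthEquiv_not_contains231_iff]
  refine ⟨fun π => ?_, ncard_suffixExtremal n⟩
  rw [suffixExtremal_iff, contains231_iff_has231, contains213_iff_has213]

/-- A permutation avoids 231 and 213 iff every Knuth-equivalent permutation avoids 231;
the number of permutations whose whole Knuth class avoids 231 is `2^(n-1)`. -/
theorem stmt_9 (n : ℕ) (hn : 1 ≤ n) :
    (∀ π : Equiv.Perm (Fin n),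
      (¬ Contains231 π ∧ ¬ Contains213 π) ↔
        ∀ σ : Equiv.Perm (Fin n), KnuthEquiv (wordOf π) (wordOf σ) → ¬ Contains231 σ) ∧
    {π : Equiv.Perm (Fin n) |
        ∀ σ : Equiv.Perm (Fin n), KnuthEquiv (wordOf π) (wordOf σ) → ¬ Contains231 σ}.ncard =
      2 ^ (n - 1) :=
  stmt_9_general n
end

section
/- If a permutation π of {1,...,n} contains an occurrence of the pattern 213, then π is Knuth-equivalent to a permutation containing a consecutive occurrence of 213 (three adjacent positions in pattern 213). -/
lemma length_wordOf {n : ℕ} (π : Equiv.Perm (Fin n)) : (wordOf π).length = n := by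
  simp [wordOf]

lemma list_decomp (l : List ℕ) (m : ℕ) (h : m + 2 < l.length) :
    l = l.take m ++ [l[m]'(by omega), l[m+1]'(by omega), l[m+2]'h] ++ l.drop (m+3) := by
  conv_lhs => rw [← List.take_append_drop m l]
  rw [List.drop_eq_getElem_cons (show m < l.length by omega),
      List.drop_eq_getElem_cons (show m+1 < l.length by omega),
      List.drop_eq_getElem_cons h]
  simp

lemma knuth_move {n : ℕ} (π : Equiv.Perm (Fin n)) (m : ℕ)
    (h0 : m < n) (h1 : m + 1 < n) (h2 : m + 2 < n)
    (hab : π ⟨m+1, h1⟩ < π ⟨m+2, h2⟩) (hbc : π ⟨m+2, h2⟩ < π ⟨m, h0⟩) :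
    ∃ σ : Equiv.Perm (Fin n), KnuthEquiv (wordOf π) (wordOf σ) ∧
      σ ⟨m, h0⟩ = π ⟨m+1, h1⟩ ∧ σ ⟨m+1, h1⟩ = π ⟨m, h0⟩ ∧
      ∀ x : Fin n, (x:ℕ) ≠ m → (x:ℕ) ≠ m+1 → σ x = π x := by
  set σ := π * Equiv.swap (⟨m, h0⟩ : Fin n) ⟨m+1, h1⟩ with hσdef
  have hoth : ∀ x : Fin n, (x:ℕ) ≠ m → (x:ℕ) ≠ m+1 → σ x = π x := by
    intro x hx1 hx2
    rw [hσdef, Equiv.Perm.mul_apply,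
      Equiv.swap_apply_of_ne_of_ne (Fin.ne_of_val_ne hx1) (Fin.ne_of_val_ne hx2)]
  have hσ0 : σ ⟨m, h0⟩ = π ⟨m+1, h1⟩ := by
    rw [hσdef, Equiv.Perm.mul_apply, Equiv.swap_apply_left]
  have hσ1 : σ ⟨m+1, h1⟩ = π ⟨m, h0⟩ := by
    rw [hσdef, Equiv.Perm.mul_apply, Equiv.swap_apply_right]
  have hσ2 : σ ⟨m+2, h2⟩ = π ⟨m+2, h2⟩ := hoth _ (show m+2 ≠ m by omega) (show m+2 ≠ m+1 by omega)
  refine ⟨σ, ?_, hσ0, hσ1, hoth⟩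
  -- it suffices to give a single KnuthStep from wordOf σ to wordOf π
  refine Relation.EqvGen.symm _ _ (Relation.EqvGen.rel _ _ ?_)
  have hlπ : m + 2 < (wordOf π).length := by rw [length_wordOf]; omega
  have hlσ : m + 2 < (wordOf σ).length := by rw [length_wordOf]; omega
  have eT : (wordOf σ).take m = (wordOf π).take m := by
    apply List.ext_getElem
    · simp [length_wordOf]
    · intro r hr1 hr2
      have hr : r < m ∧ r < n := by
        simp [List.length_take, length_wordOf] at hr1; omega
      simp only [List.getElem_take]
      simp only [wordOf, List.getElem_ofFn]
      exact congrArg Fin.val (hoth _ (show r ≠ m by omega) (show r ≠ m+1 by omega))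
  have eD : (wordOf σ).drop (m+3) = (wordOf π).drop (m+3) := by
    apply List.ext_getElem
    · simp [length_wordOf]
    · intro r hr1 hr2
      simp only [List.getElem_drop]
      simp only [wordOf, List.getElem_ofFn]
      exact congrArg Fin.val (hoth _ (show m+3+r ≠ m by omega) (show m+3+r ≠ m+1 by omega))
  have A := list_decomp (wordOf π) m hlπ
  have B := list_decomp (wordOf σ) m hlσ
  simp only [wordOf, List.getElem_ofFn] at A B
  rw [show (⟨m, _⟩ : Fin n) = (⟨m, h0⟩ : Fin n) from rfl] at A B
  -- rewrite the window entries of B using hσ0 hσ1 hσ2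
  rw [hσ0, hσ1, hσ2] at B
  simp only [wordOf] at eT eD ⊢
  rw [eT, eD] at B
  rw [A, B]
  exact KnuthStep.k2 _ _ _ _ _ (Fin.lt_def.mp hab).le (Fin.lt_def.mp hbc)

lemma meas1 {s t n M d : ℕ} (h : s*n + d ≤ M+1) (hts : t + 1 ≤ s) (hn : 2 ≤ n) :
    t*n + 1 ≤ M := by
  have e : (t+1)*n = t*n + 1*n := Nat.add_mul t 1 n
  have le := Nat.mul_le_mul_right n hts
  omega

lemma meas2 {s t n M d : ℕ} (h : s*n + d ≤ M+1) (hts : t + 2 ≤ s) (hn : 2 ≤ n) :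
    t*n + 1 ≤ M := by
  have e : (t+2)*n = t*n + 2*n := Nat.add_mul t 2 n
  have le := Nat.mul_le_mul_right n hts
  omega

lemma key (n : ℕ) : ∀ (M : ℕ) (π : Equiv.Perm (Fin n)) (i j k : Fin n),
    (i:ℕ) < (j:ℕ) → (j:ℕ) < (k:ℕ) → π j < π i → π i < π k →
    ((k:ℕ) - (i:ℕ)) * n + ((j:ℕ) - (i:ℕ)) ≤ M →
    ∃ σ : Equiv.Perm (Fin n), KnuthEquiv (wordOf π) (wordOf σ) ∧
      ∃ i' j' k' : Fin n, (j' : ℕ) = (i' : ℕ) + 1 ∧ (k' : ℕ) = (i' : ℕ) + 2 ∧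
        σ j' < σ i' ∧ σ i' < σ k' := by
  intro M
  induction M with
  | zero =>
    intro π i j k hij hjk _ _ hm
    exfalso
    have hkn : (k:ℕ) < n := k.isLt
    have h1 : 1 * 1 ≤ ((k:ℕ) - (i:ℕ)) * n := Nat.mul_le_mul (by omega) (by omega)
    omega
  | succ M ih =>
    intro π i j k hij hjk hba hbc hm
    have hkn : (k:ℕ) < n := k.isLt
    have hn2 : 2 ≤ n := by omega
    by_cases hk2 : (k:ℕ) = (i:ℕ) + 2
    · exact ⟨π, Relation.EqvGen.refl _, i, j, k, by omega, hk2, hba, hbc⟩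
    · have hk3 : (i:ℕ) + 3 ≤ (k:ℕ) := by omega
      by_cases hj1 : (j:ℕ) = (i:ℕ) + 1
      · -- j = i + 1 ; look at t = π (i+2)
        have h2n : (i:ℕ) + 2 < n := by omega
        have h1n : (i:ℕ) + 1 < n := by omega
        have h0n : (i:ℕ) < n := by omega
        set m2 : Fin n := ⟨(i:ℕ)+2, h2n⟩ with hm2def
        have hvm2 : (m2:ℕ) = (i:ℕ)+2 := rfl
        rcases lt_trichotomy (π m2) (π i) with hti | hti | hti
        · rcases lt_trichotomy (π m2) (π j) with hta | hta | hta
          · -- t < a : recurse on (j, m2, k) with no move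
            refine ih π j m2 k (by omega) (by omega) hta (lt_trans hba hbc) ?_
            have H := meas1 (t := (k:ℕ) - (j:ℕ)) hm (by omega) hn2
            omega
          · exact absurd (congrArg Fin.val (π.injective hta)) (by omega)
          · -- a < t < b : Knuth move at window i, then recurse on (i+1, i+2, k)
            have hj' : j = ⟨(i:ℕ)+1, h1n⟩ := Fin.ext hj1
            have hab : π ⟨(i:ℕ)+1, h1n⟩ < π ⟨(i:ℕ)+2, h2n⟩ := by
              rw [← hj']; exact hta
            have hbc' : π ⟨(i:ℕ)+2, h2n⟩ < π ⟨(i:ℕ), h0n⟩ := by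
              have e : (⟨(i:ℕ), h0n⟩ : Fin n) = i := Fin.ext rfl
              rw [e]; exact hti
            obtain ⟨σ, hequiv, hs0, hs1, hoth⟩ :=
              knuth_move π (i:ℕ) h0n h1n h2n hab hbc'
            set i1 : Fin n := ⟨(i:ℕ)+1, h1n⟩ with hi1def
            have hvi1 : (i1:ℕ) = (i:ℕ)+1 := rfl
            have fA : σ i1 = π i := hs1.trans (congrArg π (Fin.ext rfl))
            have fB : σ m2 = π m2 := hoth m2 (show (i:ℕ)+2 ≠ (i:ℕ) by omega)
              (show (i:ℕ)+2 ≠ (i:ℕ)+1 by omega)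
            have fC : σ k = π k := hoth k (by omega) (by omega)
            obtain ⟨σ', hq, rest⟩ := ih σ i1 m2 k (by omega) (by omega)
              (by rw [fA, fB]; exact hti)
              (by rw [fA, fC]; exact hbc)
              (by
                have H := meas1 (t := (k:ℕ) - (i1:ℕ)) hm (by omega) hn2
                omega)
            exact ⟨σ', Relation.EqvGen.trans _ _ _ hequiv hq, rest⟩
        · exact absurd (congrArg Fin.val (π.injective hti)) (by omega)
        · -- b < t : consecutive occurrence (i, j, m2) already
          exact ⟨π, Relation.EqvGen.refl _, i, j, m2, hj1, hvm2, hba, hti⟩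
      · -- j ≥ i + 2 ; look at v = π (j-1), u = π (j+1)
        have hj2 : (i:ℕ) + 2 ≤ (j:ℕ) := by omega
        have hjmn : (j:ℕ) - 1 < n := by omega
        have hjn : (j:ℕ) < n := by omega
        have hjpn : (j:ℕ) + 1 < n := by omega
        set jm : Fin n := ⟨(j:ℕ)-1, hjmn⟩ with hjmdef
        set jp : Fin n := ⟨(j:ℕ)+1, hjpn⟩ with hjpdef
        have hvjm : (jm:ℕ) = (j:ℕ)-1 := rfl
        have hvjp : (jp:ℕ) = (j:ℕ)+1 := rfl
        rcases lt_trichotomy (π jm) (π i) with hv | hv | hv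
        · -- v < b : recurse on (i, jm, k)
          exact ih π i jm k (by omega) (by omega) hv hbc (by omega)
        · exact absurd (congrArg Fin.val (π.injective hv)) (by omega)
        · -- v > b
          rcases lt_trichotomy (π jp) (π jm) with hu | hu | hu
          · -- u < v
            rcases lt_trichotomy (π jp) (π j) with hua | hua | hua
            · -- u < a : recurse on (j, jp, k)
              have hjpk : (jp:ℕ) < (k:ℕ) := by
                by_contra hcon
                have he : jp = k := Fin.ext (by omega)
                rw [he] at hua
                exact absurd (lt_trans (lt_trans hua hba) hbc) (lt_irrefl _)
              refine ih π j jp k (by omega) hjpk hua (lt_trans hba hbc) ?_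
              have H := meas2 (t := (k:ℕ) - (j:ℕ)) hm (by omega) hn2
              omega
            · exact absurd (congrArg Fin.val (π.injective hua)) (by omega)
            · -- a < u < v : Knuth move at window j-1, recurse on (i, jm, k)
              have hq1 : (j:ℕ)-1+1 < n := by omega
              have hq2 : (j:ℕ)-1+2 < n := by omega
              have e1 : (⟨(j:ℕ)-1+1, hq1⟩ : Fin n) = j :=
                Fin.ext (show (j:ℕ)-1+1 = (j:ℕ) by omega)
              have e2 : (⟨(j:ℕ)-1+2, hq2⟩ : Fin n) = jp :=
                Fin.ext (show (j:ℕ)-1+2 = (j:ℕ)+1 by omega)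
              obtain ⟨σ, hequiv, hs0, hs1, hoth⟩ :=
                knuth_move π ((j:ℕ)-1) hjmn hq1 hq2
                  (by rw [e1, e2]; exact hua) (by rw [e2]; exact hu)
              have fA : σ jm = π j := hs0.trans (congrArg π e1)
              have fB : σ i = π i := hoth i (by omega) (by omega)
              have fC : σ k = π k := hoth k (by omega) (by omega)
              obtain ⟨σ', hq, rest⟩ := ih σ i jm k (by omega) (by omega)
                (by rw [fA, fB]; exact hba)
                (by rw [fB, fC]; exact hbc)
                (by omega)
              exact ⟨σ', Relation.EqvGen.trans _ _ _ hequiv hq, rest⟩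
          · exact absurd (congrArg Fin.val (π.injective hu)) (by omega)
          · -- u > v : consecutive occurrence (jm, j, jp)
            exact ⟨π, Relation.EqvGen.refl _, jm, j, jp, by omega, by omega,
              lt_trans hba hv, hu⟩


/-- If `π` contains the pattern 213, then `π` is Knuth-equivalent to a permutation
containing a consecutive occurrence of 213. -/
theorem stmt_10 (n : ℕ) (π : Equiv.Perm (Fin n))
    (h : ∃ i j k : Fin n, i < j ∧ j < k ∧ π j < π i ∧ π i < π k) :
    ∃ σ : Equiv.Perm (Fin n), KnuthEquiv (wordOf π) (wordOf σ) ∧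
      ∃ i j k : Fin n, (j : ℕ) = (i : ℕ) + 1 ∧ (k : ℕ) = (i : ℕ) + 2 ∧
        σ j < σ i ∧ σ i < σ k := by
  obtain ⟨i, j, k, hij, hjk, h1, h2⟩ := h
  exact key n (((k:ℕ) - (i:ℕ)) * n + ((j:ℕ) - (i:ℕ))) π i j k
    (Fin.lt_def.mp hij) (Fin.lt_def.mp hjk) h1 h2 le_rfl
end

section
/- Toric equivalence is compatible with inverse: if π and μ are torically equivalent permutations of {1,...,n}, then π^{-1} and μ^{-1} are torically equivalent. -/
/-- The circular word `0π₁⋯π_n` of a permutation `π ∈ S_n`, as a function on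
`ZMod (n+1)`: position `0` holds the letter `0` and position `i` (for `1 ≤ i ≤ n`)
holds the letter `π(i)`. -/
def torHat {n : ℕ} (π : Equiv.Perm (Fin n)) (x : ZMod (n + 1)) : ZMod (n + 1) :=
  if h : x.val = 0 then 0
  else (((π ⟨x.val - 1, by have := ZMod.val_lt x; omega⟩ : Fin n) : ℕ) + 1 : ℕ)

/-- `π` and `μ` are torically equivalent: the circular word of `μ` is obtained from that
of `π` by adding a constant `m` to all letters modulo `n+1` (and re-reading from the
position just after the letter `0`, i.e. rotating positions by some `c`). -/
def ToricEquiv {n : ℕ} (π μ : Equiv.Perm (Fin n)) : Prop :=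
  ∃ m c : ZMod (n + 1), ∀ x : ZMod (n + 1), torHat μ x = torHat π (x + c) + m

/-! The circular word of `π⁻¹` is the inverse of the circular word of `π` as a permutation
of `ZMod (n+1)`, and inverting `x ↦ π̂ (x + c) + m` gives `y ↦ π̂⁻¹ (y - m) - c`. -/

theorem apply_eq_add_neg_of_forall_eq_add {G : Type*} [AddGroup G] {f f' g g' : G → G}
    (hf : Function.LeftInverse f' f) (hg : Function.LeftInverse g g') {m c : G}
    (h : ∀ x, g x = f (x + c) + m) (y : G) : g' y = f' (y + -m) + -c := by
  have hfy : f (g' y + c) = y + -m := eq_add_neg_of_add_eq (by rw [← h, hg y])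
  exact eq_add_neg_of_add_eq (by rw [← hfy, hf])

namespace ZMod

theorem eq_zero_or_exists_eq_natCast_succ {n : ℕ} (x : ZMod (n + 1)) :
    x = 0 ∨ ∃ i : Fin n, x = ((i + 1 : ℕ) : ZMod (n + 1)) := by
  rcases Nat.eq_zero_or_pos x.val with hx | hx
  · exact Or.inl ((val_eq_zero x).mp hx)
  · refine Or.inr ⟨⟨x.val - 1, by have := x.val_lt; omega⟩, ?_⟩
    rw [Nat.sub_add_cancel hx, natCast_val, cast_id]

end ZMod

theorem torHat_zero {n : ℕ} (π : Equiv.Perm (Fin n)) : torHat π 0 = 0 :=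
  dif_pos ZMod.val_zero

theorem torHat_natCast_succ {n : ℕ} (π : Equiv.Perm (Fin n)) (i : Fin n) :
    torHat π ((i + 1 : ℕ) : ZMod (n + 1)) = ((π i + 1 : ℕ) : ZMod (n + 1)) := by
  have hval : ((i + 1 : ℕ) : ZMod (n + 1)).val = i + 1 := ZMod.val_natCast_of_lt (by omega)
  rw [torHat, dif_neg (by omega)]
  congr 4
  ext
  simp only [hval, add_tsub_cancel_right]

theorem torHat_inv_torHat {n : ℕ} (π : Equiv.Perm (Fin n)) :
    Function.LeftInverse (torHat π⁻¹) (torHat π) := by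
  intro x
  rcases x.eq_zero_or_exists_eq_natCast_succ with rfl | ⟨i, rfl⟩
  · rw [torHat_zero, torHat_zero]
  · rw [torHat_natCast_succ, torHat_natCast_succ, Equiv.Perm.inv_def, Equiv.symm_apply_apply]

theorem torHat_torHat_inv {n : ℕ} (π : Equiv.Perm (Fin n)) :
    Function.LeftInverse (torHat π) (torHat π⁻¹) := by
  simpa only [inv_inv] using torHat_inv_torHat π⁻¹

/-- Toric equivalence is compatible with inverse: if `π` and `μ` are torically
equivalent, then so are `π⁻¹` and `μ⁻¹`. -/
theorem stmt_13 (n : ℕ) (π μ : Equiv.Perm (Fin n)) (h : ToricEquiv π μ) :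
    ToricEquiv π⁻¹ μ⁻¹ := by
  obtain ⟨m, c, hmc⟩ := h
  exact ⟨-c, -m,
    apply_eq_add_neg_of_forall_eq_add (torHat_inv_torHat π) (torHat_torHat_inv μ) hmc⟩
end

section
/- If k divides n, the divisor permutation δ_{k|n} = ν_{k,n} consists of k increasing runs: it is the concatenation of k maximal increasing subsequences, where the ℓ-th subsequence (1 ≤ ℓ ≤ k) consists of the consecutive integers (ℓ−1)·(n/k)+1, ..., ℓ·(n/k) placed at positions k−ℓ+1+d·k for d = 0, ..., n/k−1. Moreover δ_{k|n}(n) = n/k and δ_{k|n}(1) + δ_{k|n}(n) = n+1. -/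
lemma cast_inj_aux (N a b : ℕ) (ha : a < N + 1) (hb : b < N + 1)
    (h : (a : ZMod (N + 1)) = b) : a = b := by
  have h1 := ZMod.val_cast_of_lt ha
  have h2 := ZMod.val_cast_of_lt hb
  rw [← h1, ← h2, h]

/-- Structure of the divisor permutation `δ_{k|n} = ν_{k,n}` for `k ∣ n` (with
`n = k·m`): it consists of `k` increasing runs of consecutive integers, the `ℓ`-th run
`(ℓ−1)m+1, …, ℓm` occupying positions `k−ℓ+1+d·k` for `d = 0, …, m−1`; moreover
`δ(n) = m = n/k` and `δ(1) + δ(n) = n+1`.  (Positions and values of `Fin n` are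
0-indexed, so position `p` with `(p : ℕ) = t` is position `t+1` and the value at `p` is
`(ν p : ℕ) + 1`.) -/
theorem stmt_18 (n k m : ℕ) (hn : 0 < n) (hk : 1 ≤ k) (hm : n = k * m)
    (j : ZMod (n + 1)) (hkj : (k : ZMod (n + 1)) * j = 1)
    (ν : Equiv.Perm (Fin n))
    (hν : ∀ i : Fin n, (((ν i : ℕ) + 1 : ℕ) : ZMod (n + 1)) =
      (((i : ℕ) + 1 : ℕ) : ZMod (n + 1)) * j) :
    (∀ ℓ d : ℕ, 1 ≤ ℓ → ℓ ≤ k → d < m →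
      ∀ p : Fin n, (p : ℕ) + 1 = k - ℓ + 1 + d * k →
        (ν p : ℕ) + 1 = (ℓ - 1) * m + d + 1) ∧
    (∀ p : Fin n, (p : ℕ) + 1 = n → (ν p : ℕ) + 1 = m) ∧
    (∀ p q : Fin n, (p : ℕ) = 0 → (q : ℕ) + 1 = n →
      ((ν p : ℕ) + 1) + ((ν q : ℕ) + 1) = n + 1) := by
  have hm1 : 1 ≤ m := by nlinarith
  have hz : ((n + 1 : ℕ) : ZMod (n + 1)) = 0 := ZMod.natCast_self _
  have hz' : ((n : ℕ) : ZMod (n + 1)) + 1 = 0 := by push_cast at hz; exact hz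
  -- j = -m
  have hkm : ((k : ZMod (n + 1)) * (-(m : ZMod (n + 1)))) = 1 := by
    have : ((k : ZMod (n+1)) * (m : ZMod (n+1))) = (n : ZMod (n+1)) := by
      rw [hm]; push_cast; ring
    linear_combination -this - hz'
  have hj : j = -(m : ZMod (n + 1)) := by
    calc j = ((k : ZMod (n+1)) * (-(m : ZMod (n+1)))) * j := by rw [hkm, one_mul]
    _ = ((k : ZMod (n+1)) * j) * (-(m : ZMod (n+1))) := by ring
    _ = -(m : ZMod (n+1)) := by rw [hkj, one_mul]
  -- second part first (used in third)
  have part2 : ∀ p : Fin n, (p : ℕ) + 1 = n → (ν p : ℕ) + 1 = m := by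
    intro p hp
    have hlt := (ν p).isLt
    have hmn : m ≤ n := by nlinarith
    apply cast_inj_aux n
    · omega
    · omega
    · rw [hν p, hp, hj]
      push_cast
      linear_combination (-(m : ZMod (n+1))) * hz'
  refine ⟨?_, part2, ?_⟩
  · intro ℓ d hℓ1 hℓk hdm p hp
    obtain ⟨l, rfl⟩ : ∃ l, ℓ = l + 1 := ⟨ℓ - 1, by omega⟩
    have hck : k = (k - (l + 1)) + l + 1 := by omega
    set c := k - (l + 1) with hc
    have hlt := (ν p).isLt
    apply cast_inj_aux n
    · omega
    · have h1 : l * m + m ≤ k * m := by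
        calc l * m + m = (l + 1) * m := by ring
        _ ≤ k * m := Nat.mul_le_mul_right m hℓk
      simp only [Nat.add_sub_cancel]
      omega
    · rw [hν p, hp, hj]
      simp only [Nat.add_sub_cancel]
      have hzz : ((c + l + 1 : ℕ) : ZMod (n+1)) * (m : ZMod (n+1)) + 1 = 0 := by
        have : ((n : ℕ) : ZMod (n+1)) = ((c + l + 1 : ℕ) : ZMod (n+1)) * (m : ZMod (n+1)) := by
          rw [hm, hck]; push_cast; ring
        linear_combination hz' - this
      rw [hck]
      push_cast at hzz ⊢
      linear_combination (-(1 + (d : ZMod (n+1)))) * hzz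
  · intro p q hp hq
    have hq2 := part2 q hq
    have hpv : (((ν p : ℕ) + 1 : ℕ) : ZMod (n + 1)) = -(m : ZMod (n+1)) := by
      rw [hν p, hp, hj]; push_cast; ring
    have hsum : (((ν p : ℕ) + 1 + ((ν q : ℕ) + 1) : ℕ) : ZMod (n + 1)) = 0 := by
      rw [hq2]
      push_cast
      push_cast at hpv
      linear_combination hpv
    have hdvd : (n + 1) ∣ ((ν p : ℕ) + 1 + ((ν q : ℕ) + 1)) :=
      (ZMod.natCast_eq_zero_iff _ _).mp hsum
    obtain ⟨t, ht⟩ := hdvd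
    have h1 : (ν p : ℕ) < n := (ν p).isLt
    have h2 : (ν q : ℕ) < n := (ν q).isLt
    have : t = 1 := by nlinarith
    subst this
    omega
end
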